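/- Let μ > 0, t̄ = √(μ/(μ+1)). The function (t₁,t₂) ↦ t₁⁻¹ + t₂⁻¹ restricted to the curve T₂ = { (t₁,t₂) : 0 < t₁ < t̄ < t₂ < 1, f(t₁) = f(t₂) } (with f(t) = t^{2μ} − t^{2μ+2}) has infimum 2√((μ+1)/μ), attained only in the limit t₁ = t₂ = t̄; in particular t₁⁻¹ + t₂⁻¹ > 2√((μ+1)/μ) on T₂. -/

import Mathlib

/-! Substitute `s = 1/t`. For `0 < t < 1` one has `log f(t) = ψ(1/t)` with
`ψ(s) = log (s² - 1) - (2μ + 2) log s`, and `ψ' (s) = 2 (μ + 1 - μ s²) / (s (s² - 1))`, so `ψ`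
increases on `(1, s̄]` and decreases on `[s̄, ∞)`, where `s̄ = 1/t̄` satisfies `μ s̄² = μ + 1`.
The heart of the matter is the asymmetry `ψ(s̄ - u) < ψ(s̄ + u)` for `0 < u < s̄ - 1`: using
`μ + 1 = μ s̄²`, the derivative of `u ↦ ψ(s̄ + u) - ψ(s̄ - u)` is `2μu (φ(s̄ - u) - φ(s̄ + u))` with
`φ(x) = (s̄ + x) / (x (x² - 1))` decreasing. Hence `ψ(a) = ψ(b)` with `b < s̄ < a` forces
`a > 2s̄ - b`, i.e. `1/t₁ + 1/t₂ > 2s̄`, while the intermediate value theorem produces such pairs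
`(a, b)` arbitrarily close to `(s̄, s̄)`. -/

open Real Set

noncomputable def logProfile (μ s : ℝ) : ℝ := log (s ^ 2 - 1) - (2 * μ + 2) * log s

lemma rpow_sub_rpow_eq_exp_logProfile (μ : ℝ) {t : ℝ} (ht₀ : 0 < t) (ht₁ : t < 1) :
    t ^ (2 * μ) - t ^ (2 * μ + 2) = exp (logProfile μ t⁻¹) := by
  have h : 0 < 1 - t ^ 2 := by nlinarith
  have hlog : logProfile μ t⁻¹ = log (1 - t ^ 2) + log t * (2 * μ) := by
    rw [logProfile, show t⁻¹ ^ 2 - 1 = (1 - t ^ 2) / t ^ 2 by field_simp,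
      log_div h.ne' (by positivity), log_pow, log_inv]
    push_cast
    ring
  rw [hlog, exp_add, exp_log h, ← rpow_def_of_pos ht₀, rpow_add ht₀, rpow_two]
  ring

lemma hasDerivAt_logProfile (μ : ℝ) {x : ℝ} (hx : 1 < x) :
    HasDerivAt (logProfile μ) (2 * (μ + 1 - μ * x ^ 2) / (x * (x ^ 2 - 1))) x := by
  have hx₀ : x ≠ 0 := by positivity
  have hx₁ : x ^ 2 - 1 ≠ 0 := by nlinarith
  refine ((((hasDerivAt_pow 2 x).sub_const 1).log hx₁).sub
    ((hasDerivAt_log hx₀).const_mul (2 * μ + 2))).congr_deriv ?_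
  field_simp
  ring

lemma continuousOn_logProfile (μ : ℝ) : ContinuousOn (logProfile μ) (Ioi 1) :=
  fun _ hx => (hasDerivAt_logProfile μ hx).continuousAt.continuousWithinAt

lemma pos_of_mul_sq_eq {μ s : ℝ} (hs : 1 < s) (hμs : μ * s ^ 2 = μ + 1) : 0 < μ := by
  have : 0 < s ^ 2 - 1 := by nlinarith
  nlinarith

lemma strictMonoOn_logProfile {μ s : ℝ} (hs : 1 < s) (hμs : μ * s ^ 2 = μ + 1) :
    StrictMonoOn (logProfile μ) (Ioc 1 s) := by
  refine strictMonoOn_of_deriv_pos (convex_Ioc 1 s)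
    ((continuousOn_logProfile μ).mono Ioc_subset_Ioi_self) ?_
  rw [interior_Ioc]
  rintro x ⟨hx₁, hxs⟩
  rw [(hasDerivAt_logProfile μ hx₁).deriv]
  have hμ := pos_of_mul_sq_eq hs hμs
  have : 0 < μ + 1 - μ * x ^ 2 := by rw [← hμs, ← mul_sub]; exact mul_pos hμ (by nlinarith)
  have : 0 < x ^ 2 - 1 := by nlinarith
  positivity

lemma strictAntiOn_logProfile {μ s : ℝ} (hs : 1 < s) (hμs : μ * s ^ 2 = μ + 1) :
    StrictAntiOn (logProfile μ) (Ici s) := by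
  refine strictAntiOn_of_deriv_neg (convex_Ici s)
    ((continuousOn_logProfile μ).mono (Ici_subset_Ioi.2 hs)) ?_
  rw [interior_Ici]
  intro x hsx
  have hx₁ : 1 < x := hs.trans hsx
  rw [(hasDerivAt_logProfile μ hx₁).deriv]
  have hμ := pos_of_mul_sq_eq hs hμs
  have : μ + 1 - μ * x ^ 2 < 0 := by
    rw [← hμs, ← mul_sub]; exact mul_neg_of_pos_of_neg hμ (by nlinarith [mem_Ioi.1 hsx])
  have : 0 < x ^ 2 - 1 := by nlinarith
  exact div_neg_of_neg_of_pos (by linarith) (by positivity)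

lemma strictAntiOn_add_div_mul_sq_sub_one {s : ℝ} (hs : 0 ≤ s) :
    StrictAntiOn (fun x => (s + x) / (x * (x ^ 2 - 1))) (Ioi 1) := by
  intro b (hb : 1 < b) a (ha : 1 < a) hba
  have hb₂ : 0 < b ^ 2 - 1 := by nlinarith
  have ha₂ : 0 < a ^ 2 - 1 := by nlinarith
  have hab : 0 < a ^ 2 + a * b + b ^ 2 - 1 := by nlinarith
  rw [div_lt_div_iff₀ (by positivity) (by positivity), ← sub_pos]
  have : (s + b) * (a * (a ^ 2 - 1)) - (s + a) * (b * (b ^ 2 - 1))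
      = (a - b) * (s * (a ^ 2 + a * b + b ^ 2 - 1) + a * b * (a + b)) := by ring
  rw [this]
  have : 0 < a - b := sub_pos.2 hba
  positivity

lemma logProfile_sub_lt_logProfile_add {μ s u : ℝ} (hs : 1 < s) (hμs : μ * s ^ 2 = μ + 1)
    (hu₀ : 0 < u) (hu : u < s - 1) : logProfile μ (s - u) < logProfile μ (s + u) := by
  set φ : ℝ → ℝ := fun x => (s + x) / (x * (x ^ 2 - 1))
  have hD : ∀ v ∈ Ico 0 (s - 1),
      HasDerivAt (fun v => logProfile μ (s + v) - logProfile μ (s - v))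
        (2 * μ * v * (φ (s - v) - φ (s + v))) v := by
    rintro v ⟨hv₀, hv⟩
    refine (((hasDerivAt_logProfile μ (by linarith : 1 < s + v)).comp v
      ((hasDerivAt_id v).const_add s)).sub ((hasDerivAt_logProfile μ
      (by linarith : 1 < s - v)).comp v ((hasDerivAt_id v).const_sub s))).congr_deriv ?_
    simp only [φ, ← hμs]
    ring
  have hmono : StrictMonoOn (fun v => logProfile μ (s + v) - logProfile μ (s - v))
      (Ico 0 (s - 1)) := by
    refine strictMonoOn_of_deriv_pos (convex_Ico 0 (s - 1))
      (fun v hv => (hD v hv).continuousAt.continuousWithinAt) ?_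
    rw [interior_Ico]
    rintro v ⟨hv₀, hv⟩
    rw [(hD v ⟨hv₀.le, hv⟩).deriv]
    have hμ := pos_of_mul_sq_eq hs hμs
    have hφ : φ (s + v) < φ (s - v) :=
      strictAntiOn_add_div_mul_sq_sub_one (by linarith) (show 1 < s - v by linarith)
        (show 1 < s + v by linarith) (by linarith)
    have := sub_pos.2 hφ
    positivity
  simpa using hmono ⟨le_rfl, by linarith⟩ ⟨hu₀.le, hu⟩ hu₀

lemma two_mul_lt_add_of_logProfile_eq {μ s a b : ℝ} (hs : 1 < s) (hμs : μ * s ^ 2 = μ + 1)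
    (hb : 1 < b) (hbs : b < s) (hsa : s < a) (heq : logProfile μ a = logProfile μ b) :
    2 * s < a + b := by
  by_contra! hab
  have hlt : logProfile μ (s - (s - b)) < logProfile μ (s + (s - b)) :=
    logProfile_sub_lt_logProfile_add hs hμs (by linarith) (by linarith)
  have hle : logProfile μ (s + (s - b)) ≤ logProfile μ a :=
    (strictAntiOn_logProfile hs hμs).antitoneOn hsa.le (show s ≤ s + (s - b) by linarith)
      (by linarith)
  rw [sub_sub_cancel] at hlt
  linarith

lemma exists_logProfile_eq_add_lt {μ s ε : ℝ} (hs : 1 < s) (hμs : μ * s ^ 2 = μ + 1)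
    (hε : 0 < ε) : ∃ a b, 1 < b ∧ b < s ∧ s < a ∧ logProfile μ a = logProfile μ b ∧
      a + b < 2 * s + ε := by
  obtain ⟨c, hc₁, hcs⟩ := exists_between hs
  have hc : logProfile μ c < logProfile μ s :=
    strictMonoOn_logProfile hs hμs ⟨hc₁, hcs.le⟩ ⟨hs, le_rfl⟩ hcs
  have hd : logProfile μ (s + ε) < logProfile μ s :=
    strictAntiOn_logProfile hs hμs (mem_Ici.2 le_rfl) (by simp [hε.le]) (by linarith)
  obtain ⟨y, hy, hys⟩ := exists_between (max_lt hc hd)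
  obtain ⟨b, ⟨hcb, hbs⟩, hb⟩ := intermediate_value_Ioo hcs.le
    ((continuousOn_logProfile μ).mono fun x hx => hc₁.trans_le hx.1)
    ⟨(le_max_left _ _).trans_lt hy, hys⟩
  obtain ⟨a, ⟨hsa, had⟩, ha⟩ := intermediate_value_Ioo' (by linarith : s ≤ s + ε)
    ((continuousOn_logProfile μ).mono fun x hx => hs.trans_le hx.1)
    ⟨(le_max_right _ _).trans_lt hy, hys⟩
  exact ⟨a, b, hc₁.trans hcb, hbs, hsa, ha.trans hb.symm, by linarith⟩

lemma rpow_sub_rpow_eq_iff_logProfile_eq (μ : ℝ) {t₁ t₂ : ℝ} (h₁ : 0 < t₁) (h₁' : t₁ < 1)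
    (h₂ : 0 < t₂) (h₂' : t₂ < 1) :
    t₁ ^ (2 * μ) - t₁ ^ (2 * μ + 2) = t₂ ^ (2 * μ) - t₂ ^ (2 * μ + 2) ↔
      logProfile μ t₁⁻¹ = logProfile μ t₂⁻¹ := by
  rw [rpow_sub_rpow_eq_exp_logProfile μ h₁ h₁', rpow_sub_rpow_eq_exp_logProfile μ h₂ h₂',
    exp_eq_exp]

lemma exists_rpow_sub_rpow_eq_iff_exists_logProfile_eq {μ s x : ℝ} (hs : 1 < s) :
    (∃ t₁ t₂ : ℝ, 0 < t₁ ∧ t₁ < s⁻¹ ∧ s⁻¹ < t₂ ∧ t₂ < 1 ∧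
      t₁ ^ (2 * μ) - t₁ ^ (2 * μ + 2) = t₂ ^ (2 * μ) - t₂ ^ (2 * μ + 2) ∧ x = 1 / t₁ + 1 / t₂) ↔
    ∃ a b, 1 < b ∧ b < s ∧ s < a ∧ logProfile μ a = logProfile μ b ∧ x = a + b := by
  have hs₀ : 0 < s := by linarith
  have hs₁ : s⁻¹ < 1 := inv_lt_one_of_one_lt₀ hs
  constructor
  · rintro ⟨t₁, t₂, h₁, h₁s, h₂s, h₂, heq, rfl⟩
    have h₂₀ : 0 < t₂ := (inv_pos.2 hs₀).trans h₂s
    refine ⟨t₁⁻¹, t₂⁻¹, (one_lt_inv₀ h₂₀).2 h₂, (inv_lt_comm₀ hs₀ h₂₀).1 h₂s,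
      (lt_inv_comm₀ h₁ hs₀).1 h₁s, ?_, by simp only [one_div]⟩
    exact (rpow_sub_rpow_eq_iff_logProfile_eq μ h₁ (h₁s.trans hs₁) h₂₀ h₂).1 heq
  · rintro ⟨a, b, hb, hbs, hsa, heq, rfl⟩
    have ha₀ : 0 < a := by linarith
    have hb₀ : 0 < b := by linarith
    refine ⟨a⁻¹, b⁻¹, inv_pos.2 ha₀, inv_strictAnti₀ hs₀ hsa, inv_strictAnti₀ hb₀ hbs,
      inv_lt_one_of_one_lt₀ hb, ?_, by simp only [one_div, inv_inv]⟩
    rwa [rpow_sub_rpow_eq_iff_logProfile_eq μ (inv_pos.2 ha₀)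
      (inv_lt_one_of_one_lt₀ (hs.trans hsa)) (inv_pos.2 hb₀) (inv_lt_one_of_one_lt₀ hb),
      inv_inv, inv_inv]

theorem stmt15 (μ : ℝ) (hμ : 0 < μ) (f : ℝ → ℝ)
    (hf : ∀ t : ℝ, f t = t ^ (2*μ) - t ^ (2*μ+2))
    (tbar : ℝ) (htbar : tbar = Real.sqrt (μ/(μ+1)))
    (S : Set ℝ)
    (hS : S = {x : ℝ | ∃ t₁ t₂ : ℝ, 0 < t₁ ∧ t₁ < tbar ∧ tbar < t₂ ∧ t₂ < 1 ∧
        f t₁ = f t₂ ∧ x = 1/t₁ + 1/t₂}) :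
    IsGLB S (2 * Real.sqrt ((μ+1)/μ)) ∧
    ∀ x ∈ S, 2 * Real.sqrt ((μ+1)/μ) < x := by
  obtain rfl : f = fun t => t ^ (2*μ) - t ^ (2*μ+2) := funext hf
  set s := √((μ + 1) / μ)
  have hs : 1 < s := by
    rw [Real.lt_sqrt zero_le_one, one_pow, one_lt_div hμ]
    linarith
  have hμs : μ * s ^ 2 = μ + 1 := by
    rw [Real.sq_sqrt (by positivity)]
    field_simp
  have hmem : ∀ x, x ∈ S ↔ ∃ a b, 1 < b ∧ b < s ∧ s < a ∧
      logProfile μ a = logProfile μ b ∧ x = a + b := by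
    rw [htbar, ← inv_div, Real.sqrt_inv] at hS
    exact fun x => hS ▸ exists_rpow_sub_rpow_eq_iff_exists_logProfile_eq hs
  have hlower : ∀ x ∈ S, 2 * s < x := by
    intro x hx
    obtain ⟨a, b, hb, hbs, hsa, heq, rfl⟩ := (hmem x).1 hx
    exact two_mul_lt_add_of_logProfile_eq hs hμs hb hbs hsa heq
  refine ⟨⟨fun x hx => (hlower x hx).le, fun y hy => le_of_forall_pos_lt_add fun ε hε => ?_⟩,
    hlower⟩
  obtain ⟨a, b, hb, hbs, hsa, heq, hlt⟩ := exists_logProfile_eq_add_lt hs hμs hε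
  exact (hy ((hmem _).2 ⟨a, b, hb, hbs, hsa, heq, rfl⟩)).trans_lt hlt
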